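/- arXiv:math/0503320 — 3 statements merged into one kernel-verified Lean document; each statement's English description precedes it below -/
import Mathlib

section
/- Let −A generate the strongly continuous semigroup (T_t)_{t≥0} on a separable Hilbert space H, and let T̃_t(C) = T_t ∘ C be the lifted semigroup on L_2(K,H) with generator −Ã. Then the domain of Ã equals { C ∈ L_2(K,H) : C(K) ⊆ D(A) and A ∘ C ∈ L_2(K,H) }, and Ã(C) = A ∘ C for all C in this domain. -/
/-!
Since `‖G x‖ ≤ (∑ₖ ‖G fₖ‖²)^{1/2} ‖x‖`, convergence in `L₂(K,H)` implies pointwise convergence.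
Hence a Hilbert–Schmidt limit `L` of the difference quotients `t⁻¹ (T_t ∘ C - C)` is also their
pointwise limit, so every `C x` lies in `D(A)` and `L = -A ∘ C`.

Conversely, if every `C fₖ` lies in `D(A)`, the mean value inequality applied to
`s ↦ T_s x + s A x` gives `‖t⁻¹ (T_t x - x) + A x‖ ≤ sup_{s ≤ t} ‖T_s A x - A x‖ ≤ (M + 1) ‖A x‖`,
where `M` bounds `‖T_s‖` on `[0, 1]` by uniform boundedness. Dominated convergence for the series
`∑ₖ` then yields convergence in `L₂(K,H)` to the operator sending `fₖ` to `-A (C fₖ)`, which is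
bounded by Cauchy–Schwarz.
-/

open Filter Topology Set

section HilbertSchmidt

variable {ι 𝕜 K E : Type*} [RCLike 𝕜] [NormedAddCommGroup K] [InnerProductSpace 𝕜 K]
  [NormedAddCommGroup E] [NormedSpace 𝕜 E]

theorem summable_sq_norm_sub {u v : ι → E} (hu : Summable fun k => ‖u k‖ ^ 2)
    (hv : Summable fun k => ‖v k‖ ^ 2) : Summable fun k => ‖u k - v k‖ ^ 2 := by
  have memℓp_two_iff (w : ι → E) : Memℓp w 2 ↔ Summable fun k => ‖w k‖ ^ 2 := by
    simpa using memℓp_gen_iff (p := 2) (f := w) (by norm_num)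
  exact (memℓp_two_iff _).1 (((memℓp_two_iff u).2 hu).sub ((memℓp_two_iff v).2 hv))

theorem summable_sq_norm_map {F : Type*} [NormedAddCommGroup F] [NormedSpace 𝕜 F]
    (B : E →L[𝕜] F) {u : ι → E} (hu : Summable fun k => ‖u k‖ ^ 2) :
    Summable fun k => ‖B (u k)‖ ^ 2 := by
  refine (hu.mul_left (‖B‖ ^ 2)).of_nonneg_of_le (fun k => by positivity) fun k => ?_
  rw [← mul_pow]
  exact pow_le_pow_left₀ (norm_nonneg _) (B.le_opNorm _) 2

theorem HilbertBasis.summable_and_tsum_norm_repr_smul_le (f : HilbertBasis ι 𝕜 K) (x : K)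
    {y : ι → E} (hy : Summable fun k => ‖y k‖ ^ 2) :
    Summable (fun k => ‖f.repr x k • y k‖) ∧
      ∑' k, ‖f.repr x k • y k‖ ≤ √(∑' k, ‖y k‖ ^ 2) * ‖x‖ := by
  have hrepr := lp.norm_rpow_eq_tsum (p := 2) (by norm_num) (f.repr x)
  simp only [LinearIsometryEquiv.norm_map, ENNReal.toReal_ofNat] at hrepr
  simp only [norm_smul]
  obtain ⟨hsum, hle⟩ := Real.summable_and_inner_le_Lp_mul_Lq_tsum_of_nonneg .two_two
    (fun k => norm_nonneg (f.repr x k)) (fun k => norm_nonneg (y k))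
    ((lp.memℓp (f.repr x)).summable (by norm_num)) (by simpa [Real.rpow_two] using hy)
  refine ⟨hsum, hle.trans_eq ?_⟩
  rw [← hrepr]
  simp only [← Real.sqrt_eq_rpow, Real.rpow_two, Real.sqrt_sq (norm_nonneg x), mul_comm]

theorem HilbertBasis.norm_apply_le_sqrt_tsum_mul_norm (f : HilbertBasis ι 𝕜 K) (G : K →L[𝕜] E)
    (hG : Summable fun k => ‖G (f k)‖ ^ 2) (x : K) :
    ‖G x‖ ≤ √(∑' k, ‖G (f k)‖ ^ 2) * ‖x‖ := by
  have hx : HasSum (fun k => f.repr x k • G (f k)) (G x) := by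
    simpa using (f.hasSum_repr x).mapL G
  obtain ⟨hsum, hle⟩ := f.summable_and_tsum_norm_repr_smul_le x hG
  exact hx.tsum_eq ▸ (norm_tsum_le_tsum_norm hsum).trans hle

theorem HilbertBasis.tendsto_apply_of_tendsto_tsum_sq_norm_sub {α : Type*} {l : Filter α}
    (f : HilbertBasis ι 𝕜 K) {D : α → K →L[𝕜] E} {L : K →L[𝕜] E}
    (hD : ∀ a, Summable fun k => ‖D a (f k)‖ ^ 2) (hL : Summable fun k => ‖L (f k)‖ ^ 2)
    (h : Tendsto (fun a => ∑' k, ‖D a (f k) - L (f k)‖ ^ 2) l (𝓝 0)) (x : K) :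
    Tendsto (fun a => D a x) l (𝓝 (L x)) := by
  rw [tendsto_iff_norm_sub_tendsto_zero]
  refine squeeze_zero (fun a => norm_nonneg _)
    (fun a => f.norm_apply_le_sqrt_tsum_mul_norm (D a - L) (summable_sq_norm_sub (hD a) hL) x) ?_
  simpa using ((Real.continuous_sqrt.tendsto 0).comp h).mul_const ‖x‖

variable [CompleteSpace E]

noncomputable def HilbertBasis.constrL (f : HilbertBasis ι 𝕜 K) (y : ι → E)
    (hy : Summable fun k => ‖y k‖ ^ 2) : K →L[𝕜] E :=
  LinearMap.mkContinuous
    { toFun x := ∑' k, f.repr x k • y k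
      map_add' u v := by
        simp only [map_add, lp.coeFn_add, Pi.add_apply, add_smul]
        exact ((f.summable_and_tsum_norm_repr_smul_le u hy).1.of_norm.tsum_add
          (f.summable_and_tsum_norm_repr_smul_le v hy).1.of_norm)
      map_smul' c u := by
        simp only [map_smul, lp.coeFn_smul, Pi.smul_apply, smul_eq_mul, mul_smul,
          RingHom.id_apply]
        exact (f.summable_and_tsum_norm_repr_smul_le u hy).1.of_norm.tsum_const_smul c }
    √(∑' k, ‖y k‖ ^ 2) fun x => by
      obtain ⟨hsum, hle⟩ := f.summable_and_tsum_norm_repr_smul_le x hy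
      exact (norm_tsum_le_tsum_norm hsum).trans hle

@[simp]
theorem HilbertBasis.constrL_apply_self (f : HilbertBasis ι 𝕜 K) {y : ι → E}
    (hy : Summable fun k => ‖y k‖ ^ 2) (k : ι) : f.constrL y hy (f k) = y k := by
  classical
  simp [constrL, f.repr_self, lp.single_apply, Pi.single_apply]

end HilbertSchmidt

theorem exists_forall_opNorm_le_of_isCompact {α 𝕜 E F : Type*} [TopologicalSpace α]
    [NontriviallyNormedField 𝕜] [NormedAddCommGroup E] [NormedSpace 𝕜 E] [CompleteSpace E]
    [NormedAddCommGroup F] [NormedSpace 𝕜 F] {S : Set α} (hS : IsCompact S)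
    {T : α → E →L[𝕜] F} (hT : ∀ x, ContinuousOn (fun a => T a x) S) :
    ∃ M, ∀ a ∈ S, ‖T a‖ ≤ M := by
  obtain ⟨M, hM⟩ := banach_steinhaus (g := fun a : S => T a) fun x =>
    (hS.exists_bound_of_continuousOn (hT x)).imp fun _ hC a => hC a a.2
  exact ⟨M, fun a ha => hM ⟨a, ha⟩⟩

section Semigroup

variable {E : Type*} [NormedAddCommGroup E] [NormedSpace ℝ E] {T : ℝ → E →L[ℝ] E}

theorem hasDerivWithinAt_orbit_Ici
    (hT : ∀ s t, 0 ≤ s → 0 ≤ t → T (s + t) = (T s).comp (T t)) {x z : E}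
    (hx : Tendsto (fun t => t⁻¹ • (T t x - x)) (𝓝[>] 0) (𝓝 z)) {s : ℝ} (hs : 0 ≤ s) :
    HasDerivWithinAt (fun u => T u x) (T s z) (Ici s) s := by
  have hnhds : 𝓝[>] s = map (s + ·) (𝓝[>] 0) := by simp
  rw [← hasDerivWithinAt_Ioi_iff_Ici, hasDerivWithinAt_iff_tendsto_slope' (by simp),
    hnhds, tendsto_map'_iff]
  refine (((T s).continuous.tendsto z).comp hx).congr' ?_
  filter_upwards [self_mem_nhdsWithin] with t (ht : 0 < t)
  simp [slope_def_module, hT s t hs ht.le]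

theorem norm_inv_smul_sub_sub_le (hT0 : T 0 = ContinuousLinearMap.id ℝ E)
    (hT : ∀ s t, 0 ≤ s → 0 ≤ t → T (s + t) = (T s).comp (T t)) {x z : E}
    (hcont : ContinuousOn (fun t => T t x) (Ici 0))
    (hx : Tendsto (fun t => t⁻¹ • (T t x - x)) (𝓝[>] 0) (𝓝 z)) {t B : ℝ} (ht : 0 < t)
    (hB : ∀ s ∈ Icc 0 t, ‖T s z - z‖ ≤ B) :
    ‖t⁻¹ • (T t x - x) - z‖ ≤ B := by
  set g : ℝ → E := fun s => T s x - s • z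
  have hg : ∀ s ∈ Ico 0 t, HasDerivWithinAt g (T s z - z) (Ici s) s := fun s hs =>
    (hasDerivWithinAt_orbit_Ici hT hx hs.1).sub
      (by simpa using ((hasDerivAt_id s).smul_const z).hasDerivWithinAt)
  have hmvt : ‖g t - g 0‖ ≤ B * (t - 0) := norm_image_sub_le_of_norm_deriv_right_le_segment
    ((hcont.mono Icc_subset_Ici_self).sub (by fun_prop)) hg
    (fun s hs => hB s (Ico_subset_Icc_self hs)) t ⟨ht.le, le_rfl⟩
  have hslope : t⁻¹ • (T t x - x) - z = t⁻¹ • (g t - g 0) := by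
    simp only [g, hT0, ContinuousLinearMap.id_apply, zero_smul, sub_zero, smul_sub,
      inv_smul_smul₀ ht.ne']
    abel
  rw [hslope, norm_smul, Real.norm_of_nonneg (inv_nonneg.2 ht.le)]
  rw [sub_zero] at hmvt
  calc t⁻¹ * ‖g t - g 0‖ ≤ t⁻¹ * (B * t) := by gcongr
    _ = B := by field_simp

theorem tendsto_tsum_sq_norm_inv_smul_sub_sub {ι : Type*} [CompleteSpace E]
    (hT0 : T 0 = ContinuousLinearMap.id ℝ E)
    (hT : ∀ s t, 0 ≤ s → 0 ≤ t → T (s + t) = (T s).comp (T t))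
    (hcont : ∀ x, ContinuousOn (fun t => T t x) (Ici 0)) {x z : ι → E}
    (hx : ∀ k, Tendsto (fun t => t⁻¹ • (T t (x k) - x k)) (𝓝[>] 0) (𝓝 (z k)))
    (hz : Summable fun k => ‖z k‖ ^ 2) :
    Tendsto (fun t => ∑' k, ‖t⁻¹ • (T t (x k) - x k) - z k‖ ^ 2) (𝓝[>] 0) (𝓝 0) := by
  obtain ⟨M, hM⟩ := exists_forall_opNorm_le_of_isCompact
    (isCompact_Icc (a := (0 : ℝ)) (b := 1)) fun x => (hcont x).mono Icc_subset_Ici_self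
  have hbound : ∀ t ∈ Ioc (0 : ℝ) 1, ∀ k, ‖t⁻¹ • (T t (x k) - x k) - z k‖ ≤ (M + 1) * ‖z k‖ :=
    fun t ht k => norm_inv_smul_sub_sub_le hT0 hT (hcont _) (hx k) ht.1 fun s hs =>
      calc ‖T s (z k) - z k‖ ≤ ‖T s (z k)‖ + ‖z k‖ := norm_sub_le _ _
        _ ≤ M * ‖z k‖ + ‖z k‖ := by
          gcongr
          exact (T s).le_of_opNorm_le (hM s ⟨hs.1, hs.2.trans ht.2⟩) _
        _ = (M + 1) * ‖z k‖ := by ring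
  simpa using tendsto_tsum_of_dominated_convergence (hz.mul_left ((M + 1) ^ 2))
    (fun k => ((tendsto_sub_nhds_zero_iff.2 (hx k)).norm.pow 2))
    (by
      filter_upwards [Ioc_mem_nhdsGT zero_lt_one] with t ht k
      rw [norm_pow, norm_norm, ← mul_pow]
      exact pow_le_pow_left₀ (norm_nonneg _) (hbound t ht k) 2)

end Semigroup

theorem stmt3_general {H K : Type*} [NormedAddCommGroup H] [InnerProductSpace ℝ H]
    [CompleteSpace H] [NormedAddCommGroup K] [InnerProductSpace ℝ K]
    {ι : Type*} (f : HilbertBasis ι ℝ K)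
    (T : ℝ → H →L[ℝ] H)
    (hT0 : T 0 = ContinuousLinearMap.id ℝ H)
    (hTsemi : ∀ s t : ℝ, 0 ≤ s → 0 ≤ t → T (s + t) = (T s).comp (T t))
    (hTcont : ∀ x : H, ContinuousOn (fun t => T t x) (Set.Ici 0))
    (DA : Set H) (A : H → H)
    -- `−A` is the infinitesimal generator of `(T_t)`
    (hdom : ∀ x : H, x ∈ DA ↔ ∃ y : H,
      Filter.Tendsto (fun t : ℝ => t⁻¹ • (T t x - x))
        (nhdsWithin 0 (Set.Ioi 0)) (nhds y))
    (hgen : ∀ x ∈ DA,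
      Filter.Tendsto (fun t : ℝ => t⁻¹ • (T t x - x))
        (nhdsWithin 0 (Set.Ioi 0)) (nhds (-(A x))))
    (C : K →L[ℝ] H) (hC : Summable (fun k => ‖C (f k)‖ ^ 2)) :
    ((∃ L : K →L[ℝ] H, Summable (fun k => ‖L (f k)‖ ^ 2) ∧
        Filter.Tendsto
          (fun t : ℝ => ∑' k, ‖t⁻¹ • (T t (C (f k)) - C (f k)) - L (f k)‖ ^ 2)
          (nhdsWithin 0 (Set.Ioi 0)) (nhds 0)) ↔
      ((∀ x : K, C x ∈ DA) ∧ Summable (fun k => ‖A (C (f k))‖ ^ 2))) ∧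
    (∀ L : K →L[ℝ] H,
      (Summable (fun k => ‖L (f k)‖ ^ 2) ∧
        Filter.Tendsto
          (fun t : ℝ => ∑' k, ‖t⁻¹ • (T t (C (f k)) - C (f k)) - L (f k)‖ ^ 2)
          (nhdsWithin 0 (Set.Ioi 0)) (nhds 0)) →
      ∀ x : K, L x = -(A (C x))) := by
  have hpointwise (L : K →L[ℝ] H) (hL : Summable fun k => ‖L (f k)‖ ^ 2)
      (h : Tendsto (fun t : ℝ => ∑' k, ‖t⁻¹ • (T t (C (f k)) - C (f k)) - L (f k)‖ ^ 2)
        (𝓝[>] 0) (𝓝 0)) (x : K) :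
      Tendsto (fun t : ℝ => t⁻¹ • (T t (C x) - C x)) (𝓝[>] 0) (𝓝 (L x)) := by
    have hD (t : ℝ) : Summable fun k => ‖(t⁻¹ • ((T t).comp C - C)) (f k)‖ ^ 2 :=
      (summable_sq_norm_map (u := fun k => C (f k)) (t⁻¹ • (T t - 1)) hC).congr fun k => by simp
    simpa using f.tendsto_apply_of_tendsto_tsum_sq_norm_sub hD hL (by simpa using h) x
  have hgenerator (L : K →L[ℝ] H) (hL : (Summable fun k => ‖L (f k)‖ ^ 2) ∧
      Tendsto (fun t : ℝ => ∑' k, ‖t⁻¹ • (T t (C (f k)) - C (f k)) - L (f k)‖ ^ 2)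
        (𝓝[>] 0) (𝓝 0)) (x : K) : L x = -A (C x) :=
    have hx := hpointwise L hL.1 hL.2 x
    tendsto_nhds_unique hx (hgen _ ((hdom _).2 ⟨_, hx⟩))
  refine ⟨⟨fun ⟨L, hL, h⟩ => ⟨fun x => (hdom _).2 ⟨_, hpointwise L hL h x⟩, ?_⟩,
    fun ⟨hmem, hsum⟩ => ?_⟩, hgenerator⟩
  · simpa [hgenerator L ⟨hL, h⟩] using hL
  · have hy : Summable fun k => ‖-A (C (f k))‖ ^ 2 := by simpa using hsum
    refine ⟨f.constrL _ hy, by simpa using hy, ?_⟩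
    simpa using tendsto_tsum_sq_norm_inv_smul_sub_sub hT0 hTsemi hTcont
      (fun k => hgen _ (hmem (f k))) hy

/-- If `−A` (a closed operator with domain `DA`) generates the
strongly continuous semigroup `(T_t)` on `H`, and `T̃_t(C) = T_t ∘ C` is the
lifted semigroup on the Hilbert–Schmidt space `L₂(K,H)` with generator `−Ã`,
then `D(Ã) = {C ∈ L₂(K,H) : C(K) ⊆ D(A), A ∘ C ∈ L₂(K,H)}` and `Ã C = A ∘ C`
on this domain.  Membership of `C` in `D(Ã)` is expressed by existence of the
Hilbert–Schmidt limit `L = lim_{t→0⁺} (T̃_t C − C)/t` (so that `Ã C = −L`). -/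
theorem stmt3 {H K : Type*} [NormedAddCommGroup H] [InnerProductSpace ℝ H]
    [CompleteSpace H] [NormedAddCommGroup K] [InnerProductSpace ℝ K]
    {ι : Type*} [Countable ι] (f : HilbertBasis ι ℝ K)
    (T : ℝ → H →L[ℝ] H)
    (hT0 : T 0 = ContinuousLinearMap.id ℝ H)
    (hTsemi : ∀ s t : ℝ, 0 ≤ s → 0 ≤ t → T (s + t) = (T s).comp (T t))
    (hTcont : ∀ x : H, ContinuousOn (fun t => T t x) (Set.Ici 0))
    (DA : Set H) (A : H → H)
    -- `A` is a closed operator on `DA`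
    (hclosed : IsClosed {p : H × H | p.1 ∈ DA ∧ p.2 = A p.1})
    -- `−A` is the infinitesimal generator of `(T_t)`
    (hdom : ∀ x : H, x ∈ DA ↔ ∃ y : H,
      Filter.Tendsto (fun t : ℝ => t⁻¹ • (T t x - x))
        (nhdsWithin 0 (Set.Ioi 0)) (nhds y))
    (hgen : ∀ x ∈ DA,
      Filter.Tendsto (fun t : ℝ => t⁻¹ • (T t x - x))
        (nhdsWithin 0 (Set.Ioi 0)) (nhds (-(A x))))
    (C : K →L[ℝ] H) (hC : Summable (fun k => ‖C (f k)‖ ^ 2)) :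
    ((∃ L : K →L[ℝ] H, Summable (fun k => ‖L (f k)‖ ^ 2) ∧
        Filter.Tendsto
          (fun t : ℝ => ∑' k, ‖t⁻¹ • (T t (C (f k)) - C (f k)) - L (f k)‖ ^ 2)
          (nhdsWithin 0 (Set.Ioi 0)) (nhds 0)) ↔
      ((∀ x : K, C x ∈ DA) ∧ Summable (fun k => ‖A (C (f k))‖ ^ 2))) ∧
    (∀ L : K →L[ℝ] H,
      (Summable (fun k => ‖L (f k)‖ ^ 2) ∧
        Filter.Tendsto
          (fun t : ℝ => ∑' k, ‖t⁻¹ • (T t (C (f k)) - C (f k)) - L (f k)‖ ^ 2)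
          (nhdsWithin 0 (Set.Ioi 0)) (nhds 0)) →
      ∀ x : K, L x = -(A (C x))) :=
  stmt3_general f T hT0 hTsemi hTcont DA A hdom hgen C hC
end

section
/- Let H, K be separable Hilbert spaces, V : H → H a Hilbert–Schmidt operator, and B : H → L_2(K,H) a bounded linear operator. Define B ⋆ V : K → L_2(H) by (B ⋆ V)(f)(x) := B(V(x))(f). Then B ⋆ V is a Hilbert–Schmidt operator from K into L_2(H), and ‖B ⋆ V‖_{L_2(K,L_2(H))} ≤ ‖B‖_{L(H,L_2(K,H))} · ‖V‖_{L_2(H)}. -/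
open scoped Topology

/-- For a Hilbert–Schmidt operator `V : H → H` and a bounded
linear `B : H → L₂(K,H)` (with `‖B x‖_HS ≤ M ‖x‖`), the map
`(B ⋆ V)(f)(x) := B(V x)(f)` is Hilbert–Schmidt from `K` into `L₂(H)` with
`‖B ⋆ V‖_{L₂(K,L₂(H))} ≤ M ⬝ ‖V‖_{L₂(H)}`, where
`‖B ⋆ V‖² = Σ_k Σ_n |B(V e_n)(f_k)|²`. -/
theorem stmt4 {H K : Type*} [NormedAddCommGroup H] [InnerProductSpace ℝ H]
    [NormedAddCommGroup K] [InnerProductSpace ℝ K]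
    {ι κ : Type*} [Countable ι] [Countable κ]
    (e : HilbertBasis ι ℝ H) (f : HilbertBasis κ ℝ K)
    (V : H →L[ℝ] H) (hV : Summable (fun n => ‖V (e n)‖ ^ 2))
    (B : H →L[ℝ] (K →L[ℝ] H)) (M : ℝ) (hM : 0 ≤ M)
    (hBHS : ∀ x : H, Summable (fun k => ‖B x (f k)‖ ^ 2))
    (hB : ∀ x : H, Real.sqrt (∑' k, ‖B x (f k)‖ ^ 2) ≤ M * ‖x‖) :
    Summable (fun p : κ × ι => ‖B (V (e p.2)) (f p.1)‖ ^ 2) ∧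
      Real.sqrt (∑' p : κ × ι, ‖B (V (e p.2)) (f p.1)‖ ^ 2) ≤
        M * Real.sqrt (∑' n, ‖V (e n)‖ ^ 2) := by
  -- key pointwise bound: ∑'_k ‖B x (f k)‖² ≤ (M‖x‖)²
  have key : ∀ x : H, (∑' k, ‖B x (f k)‖ ^ 2) ≤ M ^ 2 * ‖x‖ ^ 2 := by
    intro x
    have h1 : 0 ≤ ∑' k, ‖B x (f k)‖ ^ 2 :=
      tsum_nonneg fun k => sq_nonneg _
    have := hB x
    have h2 : Real.sqrt (∑' k, ‖B x (f k)‖ ^ 2) ^ 2 ≤ (M * ‖x‖) ^ 2 :=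
      pow_le_pow_left₀ (Real.sqrt_nonneg _) this 2
    rw [Real.sq_sqrt h1] at h2
    calc (∑' k, ‖B x (f k)‖ ^ 2) ≤ (M * ‖x‖) ^ 2 := h2
      _ = M ^ 2 * ‖x‖ ^ 2 := by ring
  -- summability over ι × κ
  have hsums : Summable (fun n : ι => ∑' k, ‖B (V (e n)) (f k)‖ ^ 2) := by
    apply Summable.of_nonneg_of_le (fun n => tsum_nonneg fun k => sq_nonneg _)
      (fun n => key (V (e n)))
    exact hV.mul_left (M ^ 2)
  have hswap : Summable (fun p : ι × κ => ‖B (V (e p.1)) (f p.2)‖ ^ 2) := by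
    rw [summable_prod_of_nonneg (fun p => sq_nonneg _)]
    exact ⟨fun n => hBHS (V (e n)), hsums⟩
  have hsum : Summable (fun p : κ × ι => ‖B (V (e p.2)) (f p.1)‖ ^ 2) :=
    (Equiv.prodComm κ ι).summable_iff.mpr hswap
  refine ⟨hsum, ?_⟩
  have htsum : (∑' p : κ × ι, ‖B (V (e p.2)) (f p.1)‖ ^ 2)
      = ∑' n, ∑' k, ‖B (V (e n)) (f k)‖ ^ 2 := by
    rw [← (Equiv.prodComm ι κ).tsum_eq (fun p : κ × ι => ‖B (V (e p.2)) (f p.1)‖ ^ 2)]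
    exact Summable.tsum_prod' hswap (fun n => hBHS (V (e n)))
  have hle : (∑' p : κ × ι, ‖B (V (e p.2)) (f p.1)‖ ^ 2)
      ≤ M ^ 2 * ∑' n, ‖V (e n)‖ ^ 2 := by
    rw [htsum, ← tsum_mul_left]
    exact Summable.tsum_le_tsum (fun n => key (V (e n))) hsums (hV.mul_left _)
  calc Real.sqrt (∑' p : κ × ι, ‖B (V (e p.2)) (f p.1)‖ ^ 2)
      ≤ Real.sqrt (M ^ 2 * ∑' n, ‖V (e n)‖ ^ 2) := Real.sqrt_le_sqrt hle
    _ = M * Real.sqrt (∑' n, ‖V (e n)‖ ^ 2) := by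
        rw [Real.sqrt_mul (sq_nonneg M), Real.sqrt_sq hM]
end

section
/- (Uniform limit of compact operators solving a linear Volterra equation is compact — abstract version.) Let H be a Hilbert space and G : (0,a] → L(H) a map such that for every sequence (g_n) in the closed unit ball of H there is a subsequence (g_{n'}) with: (i) lim sup_{n',m'→∞} |G_t(g_{n'}) − G_t(g_{m'})| =: l(t) satisfies l(t) ≤ B ∫₀^t l(s)/s^{κ} ds for all t ∈ (0,a], where 0 ≤ κ < 1, and (ii) l is bounded on (0,a]. Then l(t) = 0 for all t ∈ (0,a]; i.e., (G_t(g_{n'})) is Cauchy in H for each t, and hence G_t is a compact operator for each t ∈ (0,a]. -/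
/-!
Starting from the bound `l ≤ M`, iterating the singular Volterra inequality gives
`l t ≤ M (B t^(1-κ) / (1-κ))^n / n!` for every `n`; each iteration integrates
`s^(n(1-κ) - κ)`, which is integrable at `0` because `κ < 1`. Letting `n → ∞` gives `l = 0`.
A vanishing double limsup makes the image sequence Cauchy, and a set in which every sequence has
a Cauchy subsequence is totally bounded, so in the complete space `H` the image of the unit ball
under `G t` has compact closure.
-/

open scoped Topology

/-- The double limsup `l(t) = limsup_{n,m→∞} ‖G_t(g_{φ(n)}) − G_t(g_{φ(m)})‖`. -/
noncomputable def lsup {H : Type*} [NormedAddCommGroup H] [NormedSpace ℝ H]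
    (G : ℝ → H →L[ℝ] H) (g : ℕ → H) (φ : ℕ → ℕ) (t : ℝ) : ℝ :=
  Filter.limsup (fun p : ℕ × ℕ => ‖G t (g (φ p.1)) - G t (g (φ p.2))‖)
    (Filter.atTop ×ˢ Filter.atTop)

open MeasureTheory Set Filter

section SingularGronwall

variable {l : ℝ → ℝ} {a B κ M : ℝ}

theorem integral_div_rpow_le_of_le_mul_rpow {c e t : ℝ} (ht : 0 < t) (hc : 0 ≤ c)
    (hκe : κ < e + 1) (hl : ∀ s ∈ Ioc 0 t, l s ≤ c * s ^ e) :
    ∫ s in 0..t, l s / s ^ κ ≤ c * t ^ (e - κ + 1) / (e - κ + 1) := by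
  have hpos : 0 < e - κ + 1 := by linarith
  by_cases hint : IntervalIntegrable (fun s => l s / s ^ κ) volume 0 t
  swap
  · rw [intervalIntegral.integral_undef hint]
    exact div_nonneg (mul_nonneg hc (by positivity)) hpos.le
  calc ∫ s in 0..t, l s / s ^ κ ≤ ∫ s in 0..t, c * s ^ (e - κ) := by
        refine intervalIntegral.integral_mono_on_of_le_Ioo ht.le hint
          ((intervalIntegral.intervalIntegrable_rpow' (by linarith)).const_mul c) ?_
        intro s hs
        rw [Real.rpow_sub hs.1, mul_div_assoc']
        exact div_le_div_of_nonneg_right (hl s (Ioo_subset_Ioc_self hs))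
          (Real.rpow_pos_of_pos hs.1 κ).le
    _ = c * t ^ (e - κ + 1) / (e - κ + 1) := by
        rw [intervalIntegral.integral_const_mul, integral_rpow (Or.inl (by linarith)),
          Real.zero_rpow hpos.ne']
        ring

theorem le_mul_pow_div_factorial_of_le_mul_integral_div_rpow (hB : 0 ≤ B) (hκ : κ < 1)
    (hM₀ : 0 ≤ M) (hM : ∀ t ∈ Ioc 0 a, l t ≤ M)
    (hl : ∀ t ∈ Ioc 0 a, l t ≤ B * ∫ s in 0..t, l s / s ^ κ) (n : ℕ) :
    ∀ t ∈ Ioc 0 a, l t ≤ M * (B / (1 - κ)) ^ n / n.factorial * t ^ (n * (1 - κ)) := by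
  have h1κ : 0 < 1 - κ := by linarith
  induction n with
  | zero => simpa using hM
  | succ n ih =>
    intro t ht
    have hexp : (n : ℝ) * (1 - κ) - κ + 1 = ((n + 1 : ℕ) : ℝ) * (1 - κ) := by push_cast; ring
    calc l t ≤ B * ∫ s in 0..t, l s / s ^ κ := hl t ht
      _ ≤ B * (M * (B / (1 - κ)) ^ n / n.factorial * t ^ ((n : ℝ) * (1 - κ) - κ + 1)
            / ((n : ℝ) * (1 - κ) - κ + 1)) := by
          refine mul_le_mul_of_nonneg_left
            (integral_div_rpow_le_of_le_mul_rpow ht.1 (by positivity) (by nlinarith [hκ])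
              fun s hs => ih s ⟨hs.1, hs.2.trans ht.2⟩) hB
      _ = M * (B / (1 - κ)) ^ (n + 1) / (n + 1).factorial * t ^ (((n + 1 : ℕ) : ℝ) * (1 - κ)) := by
          rw [hexp, Nat.factorial_succ, pow_succ]
          push_cast
          field_simp [h1κ.ne']

theorem eq_zero_of_le_mul_integral_div_rpow (hB : 0 ≤ B) (hκ : κ < 1)
    (hl₀ : ∀ t ∈ Ioc 0 a, 0 ≤ l t) (hM : ∀ t ∈ Ioc 0 a, l t ≤ M)
    (hl : ∀ t ∈ Ioc 0 a, l t ≤ B * ∫ s in 0..t, l s / s ^ κ) :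
    ∀ t ∈ Ioc 0 a, l t = 0 := by
  intro t ht
  set x := B / (1 - κ) * t ^ (1 - κ)
  have hbound (n : ℕ) : l t ≤ max M 0 * x ^ n / n.factorial := by
    have := le_mul_pow_div_factorial_of_le_mul_integral_div_rpow hB hκ (le_max_right M 0)
      (fun s hs => (hM s hs).trans (le_max_left M 0)) hl n t ht
    rw [mul_comm (n : ℝ), Real.rpow_mul ht.1.le, Real.rpow_natCast, mul_div_right_comm,
      mul_assoc, ← mul_pow] at this
    exact this.trans_eq (by ring)
  have hlim : Tendsto (fun n : ℕ => max M 0 * x ^ n / n.factorial) atTop (𝓝 0) := by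
    simpa [mul_div_assoc] using
      (FloorSemiring.tendsto_pow_div_factorial_atTop x).const_mul (max M 0)
  exact le_antisymm (ge_of_tendsto' hlim hbound) (hl₀ t ht)

end SingularGronwall

section DoubleLimsup

variable {E : Type*} [SeminormedAddCommGroup E] {u : ℕ → E} {C : ℝ}

theorem isBoundedUnder_norm_sub_of_norm_le (hu : ∀ n, ‖u n‖ ≤ C) :
    IsBoundedUnder (· ≤ ·) (atTop ×ˢ atTop) fun p : ℕ × ℕ => ‖u p.1 - u p.2‖ :=
  isBoundedUnder_of ⟨C + C, fun _ => (norm_sub_le _ _).trans (add_le_add (hu _) (hu _))⟩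

theorem limsup_norm_sub_nonneg (hu : ∀ n, ‖u n‖ ≤ C) :
    0 ≤ limsup (fun p : ℕ × ℕ => ‖u p.1 - u p.2‖) (atTop ×ˢ atTop) :=
  le_limsup_of_frequently_le (Frequently.of_forall fun _ => norm_nonneg _)
    (isBoundedUnder_norm_sub_of_norm_le hu)

theorem cauchySeq_of_limsup_norm_sub_le_zero (hu : ∀ n, ‖u n‖ ≤ C)
    (h : limsup (fun p : ℕ × ℕ => ‖u p.1 - u p.2‖) (atTop ×ˢ atTop) ≤ 0) : CauchySeq u := by
  rw [cauchySeq_iff_tendsto_dist_atTop_0, ← prod_atTop_atTop_eq]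
  simp_rw [dist_eq_norm]
  exact tendsto_order.2 ⟨fun ε hε => .of_forall fun _ => hε.trans_le (norm_nonneg _),
    fun ε hε => eventually_lt_of_limsup_lt (h.trans_lt hε) (isBoundedUnder_norm_sub_of_norm_le hu)⟩

variable {H : Type*} [NormedAddCommGroup H] [NormedSpace ℝ H] {G : ℝ → H →L[ℝ] H} {g : ℕ → H}
  {φ : ℕ → ℕ} {t : ℝ}

theorem lsup_nonneg (hg : ∀ n, ‖g n‖ ≤ C) : 0 ≤ lsup G g φ t :=
  limsup_norm_sub_nonneg (u := fun n => G t (g (φ n))) fun n => (G t).le_opNorm_of_le (hg (φ n))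

theorem cauchySeq_of_lsup_le_zero (hg : ∀ n, ‖g n‖ ≤ C) (h : lsup G g φ t ≤ 0) :
    CauchySeq fun n => G t (g (φ n)) :=
  cauchySeq_of_limsup_norm_sub_le_zero (u := fun n => G t (g (φ n)))
    (fun n => (G t).le_opNorm_of_le (hg (φ n))) h

end DoubleLimsup

theorem totallyBounded_of_forall_exists_cauchySeq {X : Type*} [UniformSpace X] {s : Set X}
    (h : ∀ u : ℕ → X, (∀ n, u n ∈ s) → ∃ φ : ℕ → ℕ, StrictMono φ ∧ CauchySeq (u ∘ φ)) :
    TotallyBounded s := by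
  intro V hV
  by_contra hs
  simp only [not_exists, not_and, not_subset, mem_iUnion₂, exists_prop] at hs
  obtain ⟨u, hu⟩ := seq_of_forall_finite_exists hs
  obtain ⟨φ, hφ, hc⟩ := h u fun n => (hu n).1
  obtain ⟨N, hN⟩ := hc.mem_entourage hV
  exact (hu (φ (N + 1))).2 _ (mem_image_of_mem _ (hφ N.lt_succ_self))
    (hN (N + 1) N N.le_succ le_rfl)

theorem isCompactOperator_of_forall_exists_cauchySeq {𝕜 E F : Type*} [NontriviallyNormedField 𝕜]
    [SeminormedAddCommGroup E] [NormedSpace 𝕜 E] [NormedAddCommGroup F] [NormedSpace 𝕜 F]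
    [CompleteSpace F] (f : E →L[𝕜] F)
    (h : ∀ u : ℕ → E, (∀ n, ‖u n‖ ≤ 1) →
      ∃ φ : ℕ → ℕ, StrictMono φ ∧ CauchySeq fun n => f (u (φ n))) :
    IsCompactOperator f := by
  refine (isCompactOperator_iff_isCompact_closure_image_closedBall (f : E →ₗ[𝕜] F) one_pos).2
    ((totallyBounded_of_forall_exists_cauchySeq fun v hv => ?_).closure.isCompact_of_isClosed
      isClosed_closure)
  choose u hu hfu using hv
  obtain ⟨φ, hφ, hc⟩ := h u fun n => mem_closedBall_zero_iff.1 (hu n)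
  exact ⟨φ, hφ, by simpa only [Function.comp_def, ← hfu, ContinuousLinearMap.coe_coe] using hc⟩

theorem stmt19_general {H : Type*} [NormedAddCommGroup H] [InnerProductSpace ℝ H]
    [CompleteSpace H]
    (a B κ : ℝ) (hB : 0 ≤ B) (hκ1 : κ < 1)
    (G : ℝ → H →L[ℝ] H)
    (hyp : ∀ g : ℕ → H, (∀ n, ‖g n‖ ≤ 1) →
      ∃ φ : ℕ → ℕ, StrictMono φ ∧
        (∀ t ∈ Set.Ioc (0:ℝ) a,
          lsup G g φ t ≤ B * ∫ s in (0:ℝ)..t, lsup G g φ s / s ^ κ) ∧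
        (∃ M : ℝ, ∀ t ∈ Set.Ioc (0:ℝ) a, lsup G g φ t ≤ M)) :
    (∀ g : ℕ → H, (∀ n, ‖g n‖ ≤ 1) →
      ∃ φ : ℕ → ℕ, StrictMono φ ∧
        ∀ t ∈ Set.Ioc (0:ℝ) a,
          lsup G g φ t = 0 ∧ CauchySeq (fun n => G t (g (φ n)))) ∧
    (∀ t ∈ Set.Ioc (0:ℝ) a, IsCompactOperator (G t)) := by
  have hcauchy : ∀ g : ℕ → H, (∀ n, ‖g n‖ ≤ 1) →
      ∃ φ : ℕ → ℕ, StrictMono φ ∧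
        ∀ t ∈ Ioc 0 a, lsup G g φ t = 0 ∧ CauchySeq fun n => G t (g (φ n)) := by
    intro g hg
    obtain ⟨φ, hφ, hineq, M, hM⟩ := hyp g hg
    have hzero := eq_zero_of_le_mul_integral_div_rpow hB hκ1 (fun t _ => lsup_nonneg hg) hM hineq
    exact ⟨φ, hφ, fun t ht => ⟨hzero t ht, cauchySeq_of_lsup_le_zero hg (hzero t ht).le⟩⟩
  refine ⟨hcauchy, fun t ht => isCompactOperator_of_forall_exists_cauchySeq (G t) fun g hg => ?_⟩
  obtain ⟨φ, hφ, hg'⟩ := hcauchy g hg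
  exact ⟨φ, hφ, (hg' t ht).2⟩

/-- Uniform limit of compact operators solving a linear Volterra
equation is compact — abstract version: if for every sequence in the unit
ball there is a subsequence whose double limsup `l` is bounded on `(0,a]` and
satisfies the singular Volterra inequality `l(t) ≤ B ∫₀ᵗ l(s)/s^κ ds` with
`0 ≤ κ < 1`, then `l ≡ 0` on `(0,a]`, the corresponding image sequences are
Cauchy, and each `G_t`, `t ∈ (0,a]`, is a compact operator. -/
theorem stmt19 {H : Type*} [NormedAddCommGroup H] [InnerProductSpace ℝ H]
    [CompleteSpace H]
    (a B κ : ℝ) (ha : 0 < a) (hB : 0 ≤ B) (hκ0 : 0 ≤ κ) (hκ1 : κ < 1)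
    (G : ℝ → H →L[ℝ] H)
    (hyp : ∀ g : ℕ → H, (∀ n, ‖g n‖ ≤ 1) →
      ∃ φ : ℕ → ℕ, StrictMono φ ∧
        (∀ t ∈ Set.Ioc (0:ℝ) a,
          lsup G g φ t ≤ B * ∫ s in (0:ℝ)..t, lsup G g φ s / s ^ κ) ∧
        (∃ M : ℝ, ∀ t ∈ Set.Ioc (0:ℝ) a, lsup G g φ t ≤ M)) :
    (∀ g : ℕ → H, (∀ n, ‖g n‖ ≤ 1) →
      ∃ φ : ℕ → ℕ, StrictMono φ ∧
        ∀ t ∈ Set.Ioc (0:ℝ) a,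
          lsup G g φ t = 0 ∧ CauchySeq (fun n => G t (g (φ n)))) ∧
    (∀ t ∈ Set.Ioc (0:ℝ) a, IsCompactOperator (G t)) :=
  stmt19_general a B κ hB hκ1 G hyp
end
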